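/- Let λ > 0, let φ ∈ P^r satisfy φ' − λ φ − L̂(φ(t₁)) = L(1) on I, and let w, v ∈ P^r be such that Γ_λ(v) = w. Then for all t ∈ I, v(t) = −exp(−λ(t−t₀)) · (∫_I w(s) φ(s) ds) · η(t) + ∫_{t₀}^{t} exp(λ(s−t)) w(s) ds, where η(t) = 1 − ∫_{t₀}^{t} exp(λ(s−t₀)) L(1)(s) ds. -/

import Mathlib

open Polynomial MeasureTheory intervalIntegral

/-- The rescaled Legendre polynomials on `[t₀, t₁]`: `K i` has degree `i`,
`K i (t₁) = 1`, `K i (t₀) = (-1)^i`, and they are `L²(t₀,t₁)`-orthogonal with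
`∫ K i ^ 2 = (t₁ - t₀)/(2 i + 1)`. -/
def IsLegendreBasis (t₀ t₁ : ℝ) (K : ℕ → Polynomial ℝ) : Prop :=
  (∀ i, (K i).natDegree = i) ∧ (∀ i, (K i).eval t₁ = 1) ∧
  (∀ i, (K i).eval t₀ = (-1 : ℝ) ^ i) ∧
  (∀ i j, (∫ t in t₀..t₁, (K i).eval t * (K j).eval t) =
    if i = j then (t₁ - t₀) / (2 * (i : ℝ) + 1) else 0)

/-- The lifting operator `L(z) = (z/k) ∑_{i=0}^r (-1)^i (2i+1) K_i`. -/
noncomputable def Lop (t₀ t₁ : ℝ) (r : ℕ) (K : ℕ → Polynomial ℝ) (z : ℝ) : Polynomial ℝ :=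
  Polynomial.C (z / (t₁ - t₀)) *
    ∑ i ∈ Finset.range (r + 1), Polynomial.C ((-1 : ℝ) ^ i * (2 * (i : ℝ) + 1)) * K i

/-- The endpoint lifting operator `L̂(z) = (z/k) ∑_{i=0}^r (2i+1) K_i`. -/
noncomputable def LopE (t₀ t₁ : ℝ) (r : ℕ) (K : ℕ → Polynomial ℝ) (z : ℝ) : Polynomial ℝ :=
  Polynomial.C (z / (t₁ - t₀)) *
    ∑ i ∈ Finset.range (r + 1), Polynomial.C (2 * (i : ℝ) + 1) * K i

/-- The scalar dG operator `Γ_λ(v) = v' + L(v(t₀)) + λ v`. -/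
noncomputable def Gam (t₀ t₁ : ℝ) (r : ℕ) (K : ℕ → Polynomial ℝ) (lam : ℝ)
    (v : Polynomial ℝ) : Polynomial ℝ :=
  Polynomial.derivative v + Lop t₀ t₁ r K (v.eval t₀) + Polynomial.C lam * v

/-!
Testing `Γ_λ(v) = w` against `φ` and integrating by parts, the lifting identities
`∫_I L(1) V = V(t₀)` and `∫_I L̂(1) V = V(t₁)` (checked on the Legendre basis, which spans `P^r`)
turn the adjoint equation for `φ` into `∫_I w φ = -v(t₀)`. Pointwise, `Γ_λ(v) = w` says
`v' + λ v = w - v(t₀) L(1)`, and Duhamel's formula for this ODE, with `v(t₀) = -∫_I w φ`,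
is the claimed representation.
-/

theorem Lop_eq_smul (t₀ t₁ : ℝ) (r : ℕ) (K : ℕ → ℝ[X]) (z : ℝ) :
    Lop t₀ t₁ r K z = z • Lop t₀ t₁ r K 1 := by
  rw [Lop, Lop, ← C_mul', ← mul_assoc, ← C_mul, mul_one_div]

theorem LopE_eq_smul (t₀ t₁ : ℝ) (r : ℕ) (K : ℕ → ℝ[X]) (z : ℝ) :
    LopE t₀ t₁ r K z = z • LopE t₀ t₁ r K 1 := by
  rw [LopE, LopE, ← C_mul', ← mul_assoc, ← C_mul, mul_one_div]

theorem Gam_eq (t₀ t₁ : ℝ) (r : ℕ) (K : ℕ → ℝ[X]) (lam : ℝ) (v : ℝ[X]) :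
    Gam t₀ t₁ r K lam v = derivative v + v.eval t₀ • Lop t₀ t₁ r K 1 + lam • v := by
  rw [Gam, Lop_eq_smul, C_mul']

theorem intervalIntegrable_eval_mul_eval (p q : ℝ[X]) (a b : ℝ) :
    IntervalIntegrable (fun s => p.eval s * q.eval s) volume a b :=
  (p.continuous.mul q.continuous).intervalIntegrable a b

noncomputable def l2Pairing (a b : ℝ) : ℝ[X] →ₗ[ℝ] ℝ[X] →ₗ[ℝ] ℝ :=
  LinearMap.mk₂ ℝ (fun p q => ∫ s in a..b, p.eval s * q.eval s)
    (fun p₁ p₂ q => by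
      simp only [eval_add, add_mul]
      exact integral_add (intervalIntegrable_eval_mul_eval _ _ _ _)
        (intervalIntegrable_eval_mul_eval _ _ _ _))
    (fun c p q => by
      simp only [eval_smul, smul_eq_mul, mul_assoc, intervalIntegral.integral_const_mul])
    (fun p q₁ q₂ => by
      simp only [eval_add, mul_add]
      exact integral_add (intervalIntegrable_eval_mul_eval _ _ _ _)
        (intervalIntegrable_eval_mul_eval _ _ _ _))
    (fun c p q => by
      simp only [eval_smul, smul_eq_mul, mul_left_comm, intervalIntegral.integral_const_mul])

@[simp]
theorem l2Pairing_apply (a b : ℝ) (p q : ℝ[X]) :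
    l2Pairing a b p q = ∫ s in a..b, p.eval s * q.eval s := rfl

theorem l2Pairing_comm (a b : ℝ) (p q : ℝ[X]) : l2Pairing a b p q = l2Pairing a b q p := by
  simp only [l2Pairing_apply, mul_comm]

theorem l2Pairing_derivative_add (a b : ℝ) (p q : ℝ[X]) :
    l2Pairing a b (derivative p) q + l2Pairing a b p (derivative q)
      = p.eval b * q.eval b - p.eval a * q.eval a := by
  have h := integral_deriv_mul_eq_sub (fun x _ => p.hasDerivAt x) (fun x _ => q.hasDerivAt x)
    (p.derivative.continuous.intervalIntegrable a b)
    (q.derivative.continuous.intervalIntegrable a b)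
  rwa [integral_add (intervalIntegrable_eval_mul_eval _ _ _ _)
    (intervalIntegrable_eval_mul_eval _ _ _ _)] at h

namespace IsLegendreBasis

variable {t₀ t₁ : ℝ} {K : ℕ → ℝ[X]}

theorem ne (hK : IsLegendreBasis t₀ t₁ K) : t₀ ≠ t₁ := by
  rintro rfl
  have h := (hK.2.1 1).symm.trans (hK.2.2.1 1)
  norm_num at h

theorem degree_eq (hK : IsLegendreBasis t₀ t₁ K) (i : ℕ) : (K i).degree = i := by
  have hne : K i ≠ 0 := fun h => by simpa [h] using hK.2.1 i
  rw [degree_eq_natDegree hne, hK.1 i]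

def toSequence (hK : IsLegendreBasis t₀ t₁ K) : Polynomial.Sequence ℝ := ⟨K, hK.degree_eq⟩

theorem linearMap_eq_of_natDegree_le {M : Type*} [AddCommGroup M] [Module ℝ M]
    (hK : IsLegendreBasis t₀ t₁ K) {r : ℕ} {f g : ℝ[X] →ₗ[ℝ] M}
    (hfg : ∀ n ≤ r, f (K n) = g (K n)) {V : ℝ[X]} (hV : V.natDegree ≤ r) : f V = g V := by
  have hspan := hK.toSequence.span_degreeLE (m := r) fun i _ =>
    (leadingCoeff_ne_zero.2 (hK.toSequence.ne_zero i)).isUnit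
  refine LinearMap.eqOn_span (s := K '' Set.Iic r) ?_ (hspan ▸ ?_)
  · rintro _ ⟨n, hn, rfl⟩
    exact hfg n hn
  · exact mem_degreeLE.2 (natDegree_le_iff_degree_le.1 hV)

theorem l2Pairing_sum_apply (hK : IsLegendreBasis t₀ t₁ K) (r : ℕ) (c : ℝ) (a : ℕ → ℝ) {n : ℕ}
    (hn : n ≤ r) :
    l2Pairing t₀ t₁ (C c * ∑ i ∈ Finset.range (r + 1), C (a i) * K i) (K n)
      = c * a n * ((t₁ - t₀) / (2 * (n : ℝ) + 1)) := by
  have horth (i : ℕ) : l2Pairing t₀ t₁ (K i) (K n)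
      = if i = n then (t₁ - t₀) / (2 * (n : ℝ) + 1) else 0 := by
    rw [l2Pairing_apply, hK.2.2.2 i n]; split_ifs with h <;> simp [h]
  simp only [C_mul', map_smul, map_sum, LinearMap.smul_apply, LinearMap.sum_apply, horth,
    smul_eq_mul, mul_ite, mul_zero, Finset.sum_ite_eq', Finset.mem_range,
    Nat.lt_succ_of_le hn, if_true, mul_assoc]

theorem l2Pairing_Lop (hK : IsLegendreBasis t₀ t₁ K) {r : ℕ} {V : ℝ[X]} (hV : V.natDegree ≤ r) :
    l2Pairing t₀ t₁ (Lop t₀ t₁ r K 1) V = V.eval t₀ := by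
  refine hK.linearMap_eq_of_natDegree_le (g := leval t₀) (fun n hn => ?_) hV
  have hk : t₁ - t₀ ≠ 0 := sub_ne_zero.2 hK.ne.symm
  rw [Lop, hK.l2Pairing_sum_apply r _ _ hn, leval_apply, hK.2.2.1 n]
  field_simp

theorem l2Pairing_LopE (hK : IsLegendreBasis t₀ t₁ K) {r : ℕ} {V : ℝ[X]} (hV : V.natDegree ≤ r) :
    l2Pairing t₀ t₁ (LopE t₀ t₁ r K 1) V = V.eval t₁ := by
  refine hK.linearMap_eq_of_natDegree_le (g := leval t₁) (fun n hn => ?_) hV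
  have hk : t₁ - t₀ ≠ 0 := sub_ne_zero.2 hK.ne.symm
  rw [LopE, hK.l2Pairing_sum_apply r _ _ hn, leval_apply, hK.2.1 n]
  field_simp

theorem l2Pairing_Gam_eq_neg_eval (hK : IsLegendreBasis t₀ t₁ K) {r : ℕ} {lam : ℝ} {φ v : ℝ[X]}
    (hφdeg : φ.natDegree ≤ r)
    (hφ : derivative φ - C lam * φ - LopE t₀ t₁ r K (φ.eval t₁) = Lop t₀ t₁ r K 1)
    (hv : v.natDegree ≤ r) :
    l2Pairing t₀ t₁ (Gam t₀ t₁ r K lam v) φ = -v.eval t₀ := by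
  have hφ' : derivative φ = Lop t₀ t₁ r K 1 + (lam • φ + φ.eval t₁ • LopE t₀ t₁ r K 1) := by
    rwa [LopE_eq_smul, C_mul', sub_sub, sub_eq_iff_eq_add] at hφ
  have hparts := l2Pairing_derivative_add t₀ t₁ v φ
  rw [hφ', map_add, map_add, map_smul, map_smul, l2Pairing_comm _ _ v (LopE _ _ _ _ _),
    l2Pairing_comm _ _ v (Lop _ _ _ _ _), hK.l2Pairing_Lop hv, hK.l2Pairing_LopE hv] at hparts
  rw [Gam_eq, map_add, map_add, map_smul, map_smul, LinearMap.add_apply, LinearMap.add_apply,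
    LinearMap.smul_apply, LinearMap.smul_apply, hK.l2Pairing_Lop hφdeg]
  simp only [smul_eq_mul] at hparts ⊢
  linear_combination hparts

end IsLegendreBasis

theorem integral_exp_mul_sub_eq (lam a t : ℝ) (g : ℝ → ℝ) :
    ∫ s in a..t, Real.exp (lam * (s - t)) * g s
      = Real.exp (-lam * (t - a)) * ∫ s in a..t, Real.exp (lam * (s - a)) * g s := by
  rw [← intervalIntegral.integral_const_mul]
  congr 1 with s
  rw [← mul_assoc, ← Real.exp_add]
  ring_nf

theorem eq_exp_mul_add_integral_of_hasDerivAt {v f : ℝ → ℝ} {lam a t : ℝ}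
    (hv : ∀ s ∈ Set.uIcc a t, HasDerivAt v (f s - lam * v s) s)
    (hf : IntervalIntegrable f volume a t) :
    v t = Real.exp (-lam * (t - a)) * v a + ∫ s in a..t, Real.exp (lam * (s - t)) * f s := by
  have hderiv : ∀ s ∈ Set.uIcc a t, HasDerivAt (fun u => Real.exp (lam * (u - a)) * v u)
      (Real.exp (lam * (s - a)) * f s) s := by
    intro s hs
    refine ((((hasDerivAt_id s).sub_const a).const_mul lam).exp.mul (hv s hs)).congr_deriv ?_
    simp only [id, mul_one]
    ring
  have hftc := integral_eq_sub_of_hasDerivAt hderiv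
    (hf.continuousOn_mul (by fun_prop : Continuous fun s => Real.exp (lam * (s - a))).continuousOn)
  have hinv : Real.exp (-lam * (t - a)) * Real.exp (lam * (t - a)) = 1 := by
    rw [← Real.exp_add, neg_mul, neg_add_cancel, Real.exp_zero]
  rw [integral_exp_mul_sub_eq, hftc, sub_self, mul_zero, Real.exp_zero, one_mul]
  linear_combination (-v t) * hinv

theorem stmt_10_general (t₀ t₁ : ℝ) (r : ℕ) (K : ℕ → Polynomial ℝ)
    (hK : IsLegendreBasis t₀ t₁ K) (lam : ℝ)
    (φ : Polynomial ℝ) (hφdeg : φ.natDegree ≤ r)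
    (hφ : Polynomial.derivative φ - Polynomial.C lam * φ - LopE t₀ t₁ r K (φ.eval t₁)
      = Lop t₀ t₁ r K 1)
    (w v : Polynomial ℝ) (hv : v.natDegree ≤ r)
    (hΓ : Gam t₀ t₁ r K lam v = w) :
    ∀ t ∈ Set.Ioc t₀ t₁,
      v.eval t = -Real.exp (-lam * (t - t₀)) * (∫ s in t₀..t₁, w.eval s * φ.eval s) *
          (1 - ∫ s in t₀..t, Real.exp (lam * (s - t₀)) * (Lop t₀ t₁ r K 1).eval s)
        + ∫ s in t₀..t, Real.exp (lam * (s - t)) * w.eval s := by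
  intro t _
  set L₁ := Lop t₀ t₁ r K 1
  have hdual : ∫ s in t₀..t₁, w.eval s * φ.eval s = -v.eval t₀ :=
    hΓ ▸ hK.l2Pairing_Gam_eq_neg_eval hφdeg hφ hv
  have hode (s : ℝ) (_ : s ∈ Set.uIcc t₀ t) :
      HasDerivAt (fun s => v.eval s) ((w - v.eval t₀ • L₁).eval s - lam * v.eval s) s := by
    refine (v.hasDerivAt s).congr_deriv ?_
    rw [← hΓ, Gam_eq]
    simp only [eval_sub, eval_add, eval_smul, smul_eq_mul]
    ring
  have hsplit : ∫ s in t₀..t, Real.exp (lam * (s - t)) * (w - v.eval t₀ • L₁).eval s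
      = (∫ s in t₀..t, Real.exp (lam * (s - t)) * w.eval s)
        - v.eval t₀ * ∫ s in t₀..t, Real.exp (lam * (s - t)) * L₁.eval s := by
    simp only [eval_sub, eval_smul, smul_eq_mul, mul_sub, mul_left_comm _ (v.eval t₀),
      ← intervalIntegral.integral_const_mul]
    exact integral_sub ((by fun_prop : Continuous _).intervalIntegrable _ _)
      ((by fun_prop : Continuous _).intervalIntegrable _ _)
  rw [eq_exp_mul_add_integral_of_hasDerivAt hode
    ((w - v.eval t₀ • L₁).continuous.intervalIntegrable _ _), hsplit,
    integral_exp_mul_sub_eq lam t₀ t L₁.eval, hdual]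
  ring

/-- The representation formula for `(Γ_λ)⁻¹`:
`v(t) = -exp(-λ(t-t₀)) (∫_I w φ) η(t) + ∫_{t₀}^t exp(λ(s-t)) w(s) ds`, where
`η(t) = 1 - ∫_{t₀}^t exp(λ(s-t₀)) L(1)(s) ds`. -/
theorem stmt_10 (t₀ t₁ : ℝ) (ht : t₀ < t₁) (r : ℕ) (K : ℕ → Polynomial ℝ)
    (hK : IsLegendreBasis t₀ t₁ K) (lam : ℝ) (hlam : 0 < lam)
    (φ : Polynomial ℝ) (hφdeg : φ.natDegree ≤ r)
    (hφ : Polynomial.derivative φ - Polynomial.C lam * φ - LopE t₀ t₁ r K (φ.eval t₁)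
      = Lop t₀ t₁ r K 1)
    (w v : Polynomial ℝ) (hw : w.natDegree ≤ r) (hv : v.natDegree ≤ r)
    (hΓ : Gam t₀ t₁ r K lam v = w) :
    ∀ t ∈ Set.Ioc t₀ t₁,
      v.eval t = -Real.exp (-lam * (t - t₀)) * (∫ s in t₀..t₁, w.eval s * φ.eval s) *
          (1 - ∫ s in t₀..t, Real.exp (lam * (s - t₀)) * (Lop t₀ t₁ r K 1).eval s)
        + ∫ s in t₀..t, Real.exp (lam * (s - t)) * w.eval s :=
  stmt_10_general t₀ t₁ r K hK lam φ hφdeg hφ w v hv hΓ
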